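/- Define the sequence of positive integers n_0 = 45 and n_{m+1} = 2·(2^{m+5} − 1)·n_m for m ≥ 0, and let d_m = 3^{m+1}. Then there exist constants 0 < c_1 ≤ c_2 such that for every m ≥ 1, 2^{c_1·√(log₂ n_m)} ≤ d_m ≤ 2^{c_2·√(log₂ n_m)}. -/

import Mathlib

/-- Block length of the level-`m` code `C_m`: `n_0 = 45`, `n_{m+1} = 2·(2^{m+5} − 1)·n_m`. -/
def towerBlockLength : ℕ → ℕ
  | 0 => 45
  | m + 1 => 2 * (2 ^ (m + 5) - 1) * towerBlockLength m

/-- Code distance of the level-`m` code `C_m`: `d_m = 3^{m+1}`. -/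
def towerDistance (m : ℕ) : ℕ := 3 ^ (m + 1)

/-!
Level `m + 1` multiplies the block length by a factor between `2^{m+5}` and `2^{m+6}`, so
`log₂ n_m` is quadratic in `m` and `√(log₂ n_m)` is linear in `m`, as is `log₂ d_m`.
-/

lemma two_pow_le_two_mul_two_pow_sub_one_le {k : ℕ} (hk : k ≠ 0) :
    2 ^ k ≤ 2 * (2 ^ k - 1) ∧ 2 * (2 ^ k - 1) ≤ 2 ^ (k + 1) := by
  have : 2 ≤ 2 ^ k := Nat.le_self_pow hk 2
  have : 2 ^ (k + 1) = 2 * 2 ^ k := by ring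
  omega

lemma two_pow_sq_le_towerBlockLength_sq (m : ℕ) : 2 ^ (m ^ 2) ≤ towerBlockLength m ^ 2 := by
  induction m with
  | zero => simp [towerBlockLength]
  | succ k ih =>
    calc 2 ^ ((k + 1) ^ 2) ≤ (2 ^ (k + 5)) ^ 2 * 2 ^ (k ^ 2) := by
          rw [← pow_mul, ← pow_add]
          exact Nat.pow_le_pow_right two_pos (by nlinarith)
      _ ≤ (2 * (2 ^ (k + 5) - 1)) ^ 2 * towerBlockLength k ^ 2 := by
          gcongr
          exact (two_pow_le_two_mul_two_pow_sub_one_le (by omega : k + 5 ≠ 0)).1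
      _ = towerBlockLength (k + 1) ^ 2 := by rw [towerBlockLength]; ring

lemma towerBlockLength_le_two_pow (m : ℕ) : towerBlockLength m ≤ 2 ^ ((m + 3) ^ 2) := by
  induction m with
  | zero => norm_num [towerBlockLength]
  | succ k ih =>
    calc towerBlockLength (k + 1) ≤ 2 ^ (k + 6) * 2 ^ ((k + 3) ^ 2) := by
          rw [towerBlockLength]
          exact Nat.mul_le_mul (two_pow_le_two_mul_two_pow_sub_one_le (by omega : k + 5 ≠ 0)).2 ih
      _ ≤ 2 ^ ((k + 1 + 3) ^ 2) := by
          rw [← pow_add]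
          exact Nat.pow_le_pow_right two_pos (by nlinarith)

lemma towerBlockLength_pos (m : ℕ) : 0 < towerBlockLength m :=
  (pow_pos_iff two_ne_zero).mp (lt_of_lt_of_le (by positivity) (two_pow_sq_le_towerBlockLength_sq m))

lemma sq_le_two_mul_logb_towerBlockLength (m : ℕ) :
    (m : ℝ) ^ 2 ≤ 2 * Real.logb 2 (towerBlockLength m) := by
  have hpos : (0 : ℝ) < (towerBlockLength m : ℝ) ^ 2 := by
    have := towerBlockLength_pos m
    positivity
  calc (m : ℝ) ^ 2 ≤ Real.logb 2 ((towerBlockLength m : ℝ) ^ 2) :=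
        (Real.le_logb_iff_rpow_le one_lt_two hpos).2
          (by exact_mod_cast two_pow_sq_le_towerBlockLength_sq m)
    _ = 2 * Real.logb 2 (towerBlockLength m) := by rw [Real.logb_pow]; push_cast; ring

lemma logb_towerBlockLength_le (m : ℕ) :
    Real.logb 2 (towerBlockLength m) ≤ ((m : ℝ) + 3) ^ 2 := by
  rw [Real.logb_le_iff_le_rpow one_lt_two (by exact_mod_cast towerBlockLength_pos m)]
  exact_mod_cast towerBlockLength_le_two_pow m

lemma sqrt_logb_towerBlockLength_bounds (m : ℕ) :
    (m : ℝ) / 2 ≤ √(Real.logb 2 (towerBlockLength m)) ∧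
      √(Real.logb 2 (towerBlockLength m)) ≤ m + 3 := by
  have hlow := sq_le_two_mul_logb_towerBlockLength m
  constructor
  · rw [Real.le_sqrt (by positivity) (by nlinarith)]
    nlinarith
  · rw [Real.sqrt_le_left (by positivity)]
    exact logb_towerBlockLength_le m

lemma two_pow_le_towerDistance (m : ℕ) : 2 ^ m ≤ towerDistance m :=
  calc 2 ^ m ≤ 3 ^ m := Nat.pow_le_pow_left (by norm_num) m
    _ ≤ 3 ^ (m + 1) := Nat.pow_le_pow_right (by norm_num) (by omega)

lemma towerDistance_le_two_pow (m : ℕ) : towerDistance m ≤ 2 ^ (2 * m + 2) :=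
  calc 3 ^ (m + 1) ≤ 4 ^ (m + 1) := Nat.pow_le_pow_left (by norm_num) (m + 1)
    _ = 2 ^ (2 * m + 2) := by rw [show 4 = 2 ^ 2 by rfl, ← pow_mul]; ring_nf

/-- The distance of `C_m` is `2^{Θ(√(log₂ n))}` in terms of the block length `n = n_m`:
there exist constants `0 < c₁ ≤ c₂` such that for every `m ≥ 1`,
`2^{c₁·√(log₂ n_m)} ≤ d_m ≤ 2^{c₂·√(log₂ n_m)}`. -/
theorem towerDistance_bounds :
    ∃ c₁ c₂ : ℝ, 0 < c₁ ∧ c₁ ≤ c₂ ∧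
      ∀ m : ℕ, 1 ≤ m →
        (2 : ℝ) ^ (c₁ * Real.sqrt (Real.logb 2 (towerBlockLength m))) ≤
            (towerDistance m : ℝ) ∧
        (towerDistance m : ℝ) ≤
            (2 : ℝ) ^ (c₂ * Real.sqrt (Real.logb 2 (towerBlockLength m))) := by
  refine ⟨1 / 4, 8, by norm_num, by norm_num, fun m hm => ?_⟩
  have hm' : (1 : ℝ) ≤ m := by exact_mod_cast hm
  obtain ⟨hsqrt_low, hsqrt_high⟩ := sqrt_logb_towerBlockLength_bounds m
  constructor
  · calc (2 : ℝ) ^ (1 / 4 * √(Real.logb 2 (towerBlockLength m))) ≤ (2 : ℝ) ^ (m : ℝ) :=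
          Real.rpow_le_rpow_of_exponent_le one_le_two (by linarith)
      _ = ((2 ^ m : ℕ) : ℝ) := by rw [Real.rpow_natCast]; push_cast; rfl
      _ ≤ towerDistance m := by exact_mod_cast two_pow_le_towerDistance m
  · calc (towerDistance m : ℝ) ≤ ((2 ^ (2 * m + 2) : ℕ) : ℝ) := by
          exact_mod_cast towerDistance_le_two_pow m
      _ = (2 : ℝ) ^ ((2 * m + 2 : ℕ) : ℝ) := by rw [Real.rpow_natCast]; push_cast; rfl
      _ ≤ (2 : ℝ) ^ (8 * √(Real.logb 2 (towerBlockLength m))) :=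
          Real.rpow_le_rpow_of_exponent_le one_le_two (by push_cast; linarith)
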